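/- For jointly distributed discrete random variables X, Y, J on finite spaces with X independent of J, the conditional mutual information satisfies I(X;Y|J) ≤ I(X;Y) + H(J). -/

import Mathlib

/-!
Since `X` and `J` are independent, `H(X,J) = H(X) + H(J)`, so the claim reduces to
`H(Y,J) - H(X,Y,J) ≤ H(Y) + H(J) - H(X,Y)`. This is the sum of two basic facts: a marginal has
no more entropy than the joint distribution, `H(X,Y) ≤ H(X,Y,J)`, and entropy is subadditive,
`H(Y,J) ≤ H(Y) + H(J)`, which is Gibbs' inequality against the product of the marginals.
-/

/-- Shannon entropy (base 2) of a finite nonnegative vector (e.g. a pmf). -/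
noncomputable def ent {α : Type*} [Fintype α] (f : α → ℝ) : ℝ :=
  -∑ a, f a * Real.logb 2 (f a)

open Real Finset

lemma neg_mul_log_le_negMulLog_of_le {x y : ℝ} (hx : 0 ≤ x) (hxy : x ≤ y) :
    -(x * log y) ≤ negMulLog x := by
  rcases hx.eq_or_lt with rfl | hx
  · simp
  · rw [negMulLog_eq_neg, neg_le_neg_iff]
    exact mul_le_mul_of_nonneg_left (log_le_log hx hxy) hx.le

lemma negMulLog_le_neg_mul_log_add_sub {x y : ℝ} (hx : 0 ≤ x) (hy : 0 ≤ y)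
    (hxy : y = 0 → x = 0) : negMulLog x ≤ -(x * log y) + (y - x) := by
  rcases hx.eq_or_lt with rfl | hx
  · simpa using hy
  have hy : 0 < y := hy.lt_of_ne fun h => hx.ne' (hxy h.symm)
  have h := mul_le_mul_of_nonneg_left (log_le_sub_one_of_pos (div_pos hy hx)) hx.le
  rw [log_div hy.ne' hx.ne', mul_sub, mul_sub, mul_one, mul_div_cancel₀ _ hx.ne'] at h
  rw [negMulLog_eq_neg]
  linarith

section

variable {α β : Type*} [Fintype α] [Fintype β]

lemma ent_eq_sum_negMulLog (f : α → ℝ) : ent f = (∑ a, negMulLog (f a)) / log 2 := by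
  simp only [ent, negMulLog_eq_neg, logb, sum_div, ← sum_neg_distrib, neg_div, mul_div_assoc]

lemma ent_comp_equiv (e : α ≃ β) (f : β → ℝ) : ent (fun a => f (e a)) = ent f := by
  simp only [ent, e.sum_comp fun b => f b * logb 2 (f b)]

lemma sum_mul_comp_fst (r : α × β → ℝ) (φ : α → ℝ) :
    ∑ x, r x * φ x.1 = ∑ a, (∑ b, r (a, b)) * φ a := by
  simp only [Fintype.sum_prod_type, sum_mul]

lemma sum_mul_comp_snd (r : α × β → ℝ) (φ : β → ℝ) :
    ∑ x, r x * φ x.2 = ∑ b, (∑ a, r (a, b)) * φ b := by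
  rw [Fintype.sum_prod_type, sum_comm]
  simp only [sum_mul]

lemma sum_negMulLog_le_sum_neg_mul_log (r q : α → ℝ) (hr : ∀ a, 0 ≤ r a) (hq : ∀ a, 0 ≤ q a)
    (hrq : ∀ a, q a = 0 → r a = 0) (hsum : ∑ a, q a ≤ ∑ a, r a) :
    ∑ a, negMulLog (r a) ≤ ∑ a, -(r a * log (q a)) := by
  have h := sum_le_sum fun a (_ : a ∈ univ) =>
    negMulLog_le_neg_mul_log_add_sub (hr a) (hq a) (hrq a)
  rw [sum_add_distrib, sum_sub_distrib] at h
  linarith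

lemma ent_prod_mul (f : α → ℝ) (g : β → ℝ) (hf : ∑ a, f a = 1) (hg : ∑ b, g b = 1) :
    ent (fun x : α × β => f x.1 * g x.2) = ent f + ent g := by
  simp only [ent_eq_sum_negMulLog, negMulLog_mul, Fintype.sum_prod_type, sum_add_distrib,
    ← sum_mul, ← mul_sum, hf, hg, one_mul, add_div]

lemma ent_fst_le (r : α × β → ℝ) (hr : ∀ x, 0 ≤ r x) :
    ent (fun a => ∑ b, r (a, b)) ≤ ent r := by
  rw [ent_eq_sum_negMulLog, ent_eq_sum_negMulLog]
  gcongr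
  calc ∑ a, negMulLog (∑ b, r (a, b))
      = ∑ x, r x * -log (∑ b, r (x.1, b)) := by
        rw [sum_mul_comp_fst r fun a => -log (∑ b, r (a, b))]
        simp only [negMulLog_eq_neg, mul_neg]
    _ ≤ ∑ x, negMulLog (r x) := sum_le_sum fun x _ => by
        rw [mul_neg]
        exact neg_mul_log_le_negMulLog_of_le (hr x)
          (single_le_sum (fun b _ => hr (x.1, b)) (mem_univ x.2))

lemma ent_le_ent_fst_add_ent_snd (r : α × β → ℝ) (hr : ∀ x, 0 ≤ r x) (hr1 : ∑ x, r x = 1) :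
    ent r ≤ ent (fun a => ∑ b, r (a, b)) + ent (fun b => ∑ a, r (a, b)) := by
  set f := fun a => ∑ b, r (a, b)
  set g := fun b => ∑ a, r (a, b)
  have hf : ∀ x, r x ≤ f x.1 := fun x => single_le_sum (fun b _ => hr (x.1, b)) (mem_univ x.2)
  have hg : ∀ x, r x ≤ g x.2 := fun x => single_le_sum (fun a _ => hr (a, x.2)) (mem_univ x.1)
  have hf1 : ∑ a, f a = 1 := by rw [← hr1, Fintype.sum_prod_type]
  have hg1 : ∑ b, g b = 1 := by rw [← hr1, Fintype.sum_prod_type, sum_comm]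
  have hq1 : ∑ x : α × β, f x.1 * g x.2 = 1 := by
    rw [Fintype.sum_prod_type]
    simp only [← mul_sum, hg1, mul_one, hf1]
  have hlog : ∀ x, r x * -log (f x.1 * g x.2) = r x * -log (f x.1) + r x * -log (g x.2) := by
    intro x
    rcases (hr x).eq_or_lt with h | h
    · simp [← h]
    rw [log_mul (h.trans_le (hf x)).ne' (h.trans_le (hg x)).ne']
    ring
  simp only [ent_eq_sum_negMulLog, ← add_div]
  gcongr
  calc ∑ x, negMulLog (r x)
      ≤ ∑ x, r x * -log (f x.1 * g x.2) := by
        simp only [mul_neg]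
        refine sum_negMulLog_le_sum_neg_mul_log r _ hr
          (fun x => mul_nonneg ((hr x).trans (hf x)) ((hr x).trans (hg x))) (fun x hx => ?_) ?_
        · rcases mul_eq_zero.mp hx with h | h
          · exact le_antisymm (h ▸ hf x) (hr x)
          · exact le_antisymm (h ▸ hg x) (hr x)
        · rw [hq1, hr1]
    _ = ∑ a, negMulLog (f a) + ∑ b, negMulLog (g b) := by
        rw [sum_congr rfl fun x _ => hlog x, sum_add_distrib,
          sum_mul_comp_fst r fun a => -log (f a), sum_mul_comp_snd r fun b => -log (g b)]
        simp only [negMulLog_eq_neg, mul_neg, f, g]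

end

/-- For jointly distributed finite random variables `X, Y, J`
(joint pmf `p` on `A × B × C`) with `X` independent of `J`,
`I(X;Y|J) ≤ I(X;Y) + H(J)`, where
`I(X;Y|J) = H(X,J) − H(J) − H(X,Y,J) + H(Y,J)` and
`I(X;Y) = H(X) + H(Y) − H(X,Y)`. -/
theorem condMutualInfo_le_mutualInfo_add_entropy
    {A B C : Type*} [Fintype A] [Fintype B] [Fintype C]
    (p : A × B × C → ℝ)
    (hp0 : ∀ x, 0 ≤ p x) (hp1 : ∑ x, p x = 1)
    (hindep : ∀ a c, (∑ b, p (a, b, c)) =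
      (∑ bc : B × C, p (a, bc.1, bc.2)) * (∑ ab : A × B, p (ab.1, ab.2, c))) :
    (ent (fun ac : A × C => ∑ b, p (ac.1, b, ac.2))
        - ent (fun c : C => ∑ ab : A × B, p (ab.1, ab.2, c))
        - ent p
        + ent (fun bc : B × C => ∑ a, p (a, bc.1, bc.2)))
      ≤ (ent (fun a : A => ∑ bc : B × C, p (a, bc.1, bc.2))
        + ent (fun b : B => ∑ ac : A × C, p (ac.1, b, ac.2))
        - ent (fun ab : A × B => ∑ c, p (ab.1, ab.2, c)))
        + ent (fun c : C => ∑ ab : A × B, p (ab.1, ab.2, c)) := by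
  set X := fun a : A => ∑ bc : B × C, p (a, bc.1, bc.2)
  set J := fun c : C => ∑ ab : A × B, p (ab.1, ab.2, c)
  have hX1 : ∑ a, X a = 1 := by rw [← hp1, Fintype.sum_prod_type]
  have hJ1 : ∑ c, J c = 1 := by rw [← hp1, sum_comm]; simp only [Fintype.sum_prod_type]
  have hXJ : ent (fun ac : A × C => ∑ b, p (ac.1, b, ac.2)) = ent X + ent J := by
    rw [← ent_prod_mul X J hX1 hJ1]
    exact congrArg ent (funext fun ac => hindep ac.1 ac.2)
  have hXY : ent (fun ab : A × B => ∑ c, p (ab.1, ab.2, c)) ≤ ent p :=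
    (ent_fst_le _ fun _ => hp0 _).trans_eq (ent_comp_equiv (Equiv.prodAssoc A B C) p)
  have hYJ : ent (fun bc : B × C => ∑ a, p (a, bc.1, bc.2))
      ≤ ent (fun b : B => ∑ ac : A × C, p (ac.1, b, ac.2)) + ent J := by
    convert ent_le_ent_fst_add_ent_snd (fun bc : B × C => ∑ a, p (a, bc.1, bc.2))
      (fun bc => sum_nonneg fun a _ => hp0 _) (by rw [sum_comm, ← hp1, Fintype.sum_prod_type])
      using 3 <;> exact funext fun _ => (Fintype.sum_prod_type _).trans sum_comm
  linarith
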